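/- arXiv:1907.01781 — 5 statements merged into one kernel-verified Lean document; each statement's English description precedes it below -/
import Mathlib

section
/- Let p : X → [0,1] be measurable on a probability space (X, P_X) and let U be uniform on [0,1]. Define R = ∫_X 1_{p(x) > U} P_X(dx). Then for every integer m ≥ 1, E[R^m] = ∫_{X^m} min(p(x_1), ..., p(x_m)) P_X(dx_1)···P_X(dx_m). -/
/-!
Since `U` is uniform on `[0, 1]`, `E[R^m] = ∫₀¹ μ{u < p}^m du`. The `m`-th power of `μ{u < p}` is the
product measure of `{y | ∀ i, u < p (y i)} = {y | u < min_i p (y i)}`, so the integral over `u` is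
the layer-cake formula for the `[0, 1]`-valued function `y ↦ min_i p (y i)`.
-/

open MeasureTheory Set

theorem lt_ciInf_iff_of_finite {ι α : Type*} [Finite ι] [Nonempty ι]
    [ConditionallyCompleteLinearOrder α] {f : ι → α} {a : α} :
    a < ⨅ i, f i ↔ ∀ i, a < f i := by
  refine ⟨fun h i => h.trans_le (ciInf_le (finite_range f).bddBelow i), fun h => ?_⟩
  obtain ⟨i, hi⟩ := exists_eq_ciInf_of_finite (f := f)
  exact hi ▸ h i

theorem MeasureTheory.measureReal_pi_setOf_forall_mem {ι α : Type*} [Fintype ι]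
    [MeasurableSpace α] (μ : Measure α) [SigmaFinite μ] (s : Set α) :
    (Measure.pi fun _ : ι => μ).real {y | ∀ i, y i ∈ s} = μ.real s ^ Fintype.card ι := by
  rw [show {y : ι → α | ∀ i, y i ∈ s} = univ.pi fun _ => s by ext; simp, measureReal_def,
    Measure.pi_pi, Finset.prod_const, Finset.card_univ, ENNReal.toReal_pow, measureReal_def]

theorem MeasureTheory.Integrable.integral_eq_integral_Icc_meas_lt {α : Type*}
    [MeasurableSpace α] {μ : Measure α} {f : α → ℝ} {M : ℝ} (f_intble : Integrable f μ)
    (f_nn : 0 ≤ᵐ[μ] f) (f_bdd : f ≤ᵐ[μ] fun _ => M) :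
    ∫ a, f a ∂μ = ∫ t in Icc 0 M, μ.real {a | t < f a} := by
  rw [f_intble.integral_eq_integral_meas_lt f_nn, integral_Icc_eq_integral_Ioc,
    setIntegral_eq_of_subset_of_ae_sdiff_eq_zero nullMeasurableSet_Ioi Ioc_subset_Ioi_self]
  refine ae_of_all _ fun t ht => ?_
  have hMt : M < t := by
    simp only [mem_sdiff, mem_Ioi, mem_Ioc, not_and, not_le] at ht
    exact ht.2 ht.1
  rw [measureReal_def, ENNReal.toReal_eq_zero_iff, measure_eq_zero_iff_ae_notMem]
  left
  filter_upwards [f_bdd] with a ha using not_lt.mpr (ha.trans hMt.le)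

theorem stmt_2_general
    {Ω X : Type*} [MeasurableSpace Ω] [MeasurableSpace X]
    (ℙ : Measure Ω)
    (μ : Measure X) [IsProbabilityMeasure μ]
    (p : X → ℝ) (hpm : Measurable p) (hp01 : ∀ x, p x ∈ Set.Icc (0:ℝ) 1)
    (U : Ω → ℝ) (hUm : Measurable U)
    (hU : Measure.map U ℙ = volume.restrict (Set.Icc (0:ℝ) 1))
    (R : Ω → ℝ) (hR : ∀ ω, R ω = (μ {x | U ω < p x}).toReal)
    (m : ℕ) (hm : 1 ≤ m) :
    ∫ ω, (R ω) ^ m ∂ℙ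
      = ∫ x : Fin m → X, ⨅ i, p (x i) ∂(Measure.pi fun _ => μ) := by
  have : Nonempty (Fin m) := ⟨⟨0, hm⟩⟩
  have h_tail_anti : Antitone fun u : ℝ => μ {x | u < p x} :=
    fun _ _ huv => measure_mono fun _ hx => huv.trans_lt hx
  have h_tail : Measurable fun u : ℝ => μ.real {x | u < p x} ^ m :=
    h_tail_anti.measurable.ennreal_toReal.pow_const m
  have h_min : Measurable fun y : Fin m → X => ⨅ i, p (y i) :=
    .iInf fun i => hpm.comp (measurable_pi_apply i)
  have h_min_mem : ∀ y : Fin m → X, ⨅ i, p (y i) ∈ Icc (0 : ℝ) 1 := fun y =>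
    ⟨le_ciInf fun i => (hp01 _).1, (ciInf_le (finite_range _).bddBelow ⟨0, hm⟩).trans (hp01 _).2⟩
  calc ∫ ω, R ω ^ m ∂ℙ = ∫ ω, μ.real {x | U ω < p x} ^ m ∂ℙ := by simp only [hR, measureReal_def]
    _ = ∫ u in Icc 0 1, μ.real {x | u < p x} ^ m := by
      rw [← hU, integral_map hUm.aemeasurable h_tail.aestronglyMeasurable]
    _ = ∫ u in Icc 0 1, (Measure.pi fun _ => μ).real {y : Fin m → X | u < ⨅ i, p (y i)} := by
      simp_rw [lt_ciInf_iff_of_finite]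
      congr! 2 with u
      simpa using (measureReal_pi_setOf_forall_mem (ι := Fin m) μ {x | u < p x}).symm
    _ = ∫ y, ⨅ i, p (y i) ∂(Measure.pi fun _ => μ) := by
      refine (Integrable.integral_eq_integral_Icc_meas_lt ?_ ?_ ?_).symm
      · refine .of_bound h_min.aestronglyMeasurable 1 (ae_of_all _ fun y => ?_)
        rw [Real.norm_of_nonneg (h_min_mem y).1]
        exact (h_min_mem y).2
      · exact ae_of_all _ fun y => (h_min_mem y).1
      · exact ae_of_all _ fun y => (h_min_mem y).2

theorem stmt_2
    {Ω X : Type*} [MeasurableSpace Ω] [MeasurableSpace X]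
    (ℙ : Measure Ω) [IsProbabilityMeasure ℙ]
    (μ : Measure X) [IsProbabilityMeasure μ]
    (p : X → ℝ) (hpm : Measurable p) (hp01 : ∀ x, p x ∈ Set.Icc (0:ℝ) 1)
    (U : Ω → ℝ) (hUm : Measurable U)
    (hU : Measure.map U ℙ = volume.restrict (Set.Icc (0:ℝ) 1))
    (R : Ω → ℝ) (hR : ∀ ω, R ω = (μ {x | U ω < p x}).toReal)
    (m : ℕ) (hm : 1 ≤ m) :
    ∫ ω, (R ω) ^ m ∂ℙ
      = ∫ x : Fin m → X, ⨅ i, p (x i) ∂(Measure.pi fun _ => μ) :=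
  stmt_2_general ℙ μ p hpm hp01 U hUm hU R hR m hm
end

section
/- Let ξ be a stochastic process on a probability space indexed by a set X with measurable paths, T ∈ ℝ a threshold, and X̄ an X-valued random variable with law P_X independent of ξ. Define S = ∫_X 1_{ξ(x) > T} P_X(dx) (a random variable depending on ξ), p(x) = P(ξ(x) > T), U uniform on [0,1], and R = ∫_X 1_{p(x) > U} P_X(dx). Then S is smaller than R in the convex order: for every convex function φ : ℝ → ℝ such that the expectations exist, E[φ(S)] ≤ E[φ(R)]. -/
/-!
`S` and `R` are the `μ`-measures of two random subsets of `X` with the same coverage function `p`: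
the sections of `A = {T < ξ}` under `ℙ`, and the superlevel sets `{p > U}` under `ℙ'`. Both take
values in `[0, 1]` and, by Fubini, both have mean `∫ p dμ`.

For a weight `d : X → [0, 1]` with `∫ d dμ = a`, the pointwise bound
`(μ(A_ω) - a)⁺ ≤ ∫ (1_{A_ω} - d)⁺ dμ = ∫ (1 - d) 1_{A_ω} dμ` integrates to
`E (S - a)⁺ ≤ ∫ (1 - d) p dμ`. If `d` is a fractional superlevel set of `p` (`1` above a threshold
`t`, `0` below it), every set `{p > u}` lies either above or below `d`, so the same bound is an
equality for `R`; hence `E (S - a)⁺ ≤ E (R - a)⁺` for all `a ∈ [0, 1]`.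

Finally, on `[0, 1]` a convex `φ` lies below its piecewise-linear interpolant on a fine grid, which
in turn is at most `φ + ε`; the interpolant is an affine function plus a nonnegative combination of
hinges `(x - a)⁺`, so equal means and the stop-loss inequalities give `E φ(S) ≤ E φ(R)`.
-/

open MeasureTheory Set

lemma measureReal_mem_Icc {α : Type*} [MeasurableSpace α] {ν : Measure α} [IsProbabilityMeasure ν]
    (s : Set α) : ν.real s ∈ Icc 0 1 :=
  ⟨measureReal_nonneg, measureReal_le_one⟩

lemma max_integral_le_integral_max {X : Type*} [MeasurableSpace X] {μ : Measure X} {g : X → ℝ}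
    (hg : Integrable g μ) : max (∫ x, g x ∂μ) 0 ≤ ∫ x, max (g x) 0 ∂μ :=
  max_le (integral_mono hg hg.pos_part fun _ => le_max_left _ _)
    (integral_nonneg fun _ => le_max_right _ _)

lemma max_integral_eq_integral_max {X : Type*} [MeasurableSpace X] {μ : Measure X} {g : X → ℝ}
    (h : 0 ≤ᵐ[μ] g ∨ g ≤ᵐ[μ] 0) : max (∫ x, g x ∂μ) 0 = ∫ x, max (g x) 0 ∂μ := by
  rcases h with h | h
  · rw [max_eq_left (integral_nonneg_of_ae h)]
    exact integral_congr_ae (h.mono fun x hx => (max_eq_left hx).symm)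
  · rw [max_eq_right (integral_nonpos_of_ae h), eq_comm]
    exact integral_eq_zero_of_ae (h.mono fun x hx => max_eq_right hx)

lemma max_indicator_sub {X : Type*} {s : Set X} {d : X → ℝ} {x : X} (hd : d x ∈ Icc 0 1) :
    max (s.indicator 1 x - d x) 0 = (1 - d x) * s.indicator 1 x := by
  by_cases hx : x ∈ s
  · simp [hx, hd.2]
  · simp [hx, hd.1]

section RandomSet

variable {Ω X : Type*} [MeasurableSpace Ω] [MeasurableSpace X]
  {ℙ : Measure Ω} {μ : Measure X} [IsFiniteMeasure ℙ] [IsFiniteMeasure μ]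
  {A : Set (Ω × X)} {d : X → ℝ}

lemma measureReal_sub_integral (hdi : Integrable d μ) {s : Set X} (hs : MeasurableSet s) :
    μ.real s - ∫ x, d x ∂μ = ∫ x, (s.indicator 1 x - d x) ∂μ := by
  have hsi : Integrable (s.indicator (1 : X → ℝ)) μ :=
    (integrable_indicator_iff hs).2 (integrable_const 1).integrableOn
  rw [← integral_indicator_one hs, ← integral_sub hsi hdi]

lemma integrable_indicator_sub (hdi : Integrable d μ) {s : Set X} (hs : MeasurableSet s) :
    Integrable (fun x => s.indicator 1 x - d x) μ :=
  ((integrable_indicator_iff hs).2 (integrable_const 1).integrableOn).sub hdi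

lemma max_measureReal_sub_integral_le (hdi : Integrable d μ) (hd01 : ∀ x, d x ∈ Icc 0 1)
    {s : Set X} (hs : MeasurableSet s) :
    max (μ.real s - ∫ x, d x ∂μ) 0 ≤ ∫ x, (1 - d x) * s.indicator 1 x ∂μ := by
  rw [measureReal_sub_integral hdi hs]
  simp_rw [← max_indicator_sub (hd01 _)]
  exact max_integral_le_integral_max (integrable_indicator_sub hdi hs)

lemma max_measureReal_sub_integral_eq (hdi : Integrable d μ) (hd01 : ∀ x, d x ∈ Icc 0 1)
    {s : Set X} (hs : MeasurableSet s)
    (hsign : (∀ x, d x ≤ s.indicator 1 x) ∨ (∀ x, s.indicator 1 x ≤ d x)) :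
    max (μ.real s - ∫ x, d x ∂μ) 0 = ∫ x, (1 - d x) * s.indicator 1 x ∂μ := by
  rw [measureReal_sub_integral hdi hs]
  simp_rw [← max_indicator_sub (hd01 _)]
  refine max_integral_eq_integral_max (hsign.imp (fun h => .of_forall fun x => ?_)
    (fun h => .of_forall fun x => ?_)) <;> simpa using h x

lemma integrable_mul_indicator (hA : MeasurableSet A) {w : X → ℝ} (hw : Integrable w μ) :
    Integrable (fun z : Ω × X => w z.2 * A.indicator 1 z) (ℙ.prod μ) := by
  refine (hw.norm.comp_snd ℙ).mono' ?_ (.of_forall fun z => ?_)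
  · exact (hw.comp_snd ℙ).aestronglyMeasurable.mul
      ((measurable_const.indicator hA).aestronglyMeasurable)
  · by_cases hz : z ∈ A <;> simp [hz]

lemma integral_integral_mul_indicator (hA : MeasurableSet A) {w : X → ℝ} (hw : Integrable w μ) :
    ∫ ω, ∫ x, w x * (Prod.mk ω ⁻¹' A).indicator 1 x ∂μ ∂ℙ
      = ∫ x, w x * ℙ.real ((·, x) ⁻¹' A) ∂μ := by
  rw [integral_integral_swap (integrable_mul_indicator hA hw)]
  refine integral_congr_ae (.of_forall fun x => ?_)
  simp only
  rw [integral_const_mul]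
  congr 1
  exact integral_indicator_one (measurable_prodMk_right hA)

theorem integral_max_measureReal_sub_le (hA : MeasurableSet A) (hdi : Integrable d μ)
    (hd01 : ∀ x, d x ∈ Icc 0 1) :
    ∫ ω, max (μ.real (Prod.mk ω ⁻¹' A) - ∫ x, d x ∂μ) 0 ∂ℙ
      ≤ ∫ x, (1 - d x) * ℙ.real ((·, x) ⁻¹' A) ∂μ := by
  have hw : Integrable (fun x => 1 - d x) μ := (integrable_const 1).sub hdi
  rw [← integral_integral_mul_indicator hA hw]
  exact integral_mono_of_nonneg (.of_forall fun _ => le_max_right _ _)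
    (integrable_mul_indicator hA hw).integral_prod_left
    (.of_forall fun ω => max_measureReal_sub_integral_le hdi hd01 (measurable_prodMk_left hA))

theorem integral_max_measureReal_sub_eq (hA : MeasurableSet A) (hdi : Integrable d μ)
    (hd01 : ∀ x, d x ∈ Icc 0 1)
    (hsign : ∀ᵐ ω ∂ℙ, (∀ x, d x ≤ A.indicator 1 (ω, x)) ∨ (∀ x, A.indicator 1 (ω, x) ≤ d x)) :
    ∫ ω, max (μ.real (Prod.mk ω ⁻¹' A) - ∫ x, d x ∂μ) 0 ∂ℙ
      = ∫ x, (1 - d x) * ℙ.real ((·, x) ⁻¹' A) ∂μ := by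
  have hw : Integrable (fun x => 1 - d x) μ := (integrable_const 1).sub hdi
  rw [← integral_integral_mul_indicator hA hw]
  exact integral_congr_ae (hsign.mono fun ω h =>
    max_measureReal_sub_integral_eq hdi hd01 (measurable_prodMk_left hA) h)

theorem integral_measureReal_prodMk_left (hA : MeasurableSet A) :
    ∫ ω, μ.real (Prod.mk ω ⁻¹' A) ∂ℙ = ∫ x, ℙ.real ((·, x) ⁻¹' A) ∂μ := by
  have h := integral_integral_mul_indicator (ℙ := ℙ) hA (integrable_const (μ := μ) (1 : ℝ))
  simp only [one_mul] at h
  rw [← h]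
  exact integral_congr_ae (.of_forall fun ω =>
    (integral_indicator_one (measurable_prodMk_left hA)).symm)

end RandomSet

lemma measureReal_lt_of_map_eq_uniform {Ω : Type*} [MeasurableSpace Ω] {ℙ : Measure Ω}
    {U : Ω → ℝ} (hUm : Measurable U) (hU : ℙ.map U = volume.restrict (Icc 0 1)) {c : ℝ}
    (hc : c ∈ Icc 0 1) : ℙ.real {ω | U ω < c} = c := by
  have hIio : Iio c ∩ Icc 0 1 = Ico 0 c := by
    ext u; simp only [mem_inter_iff, mem_Iio, mem_Icc, mem_Ico]
    constructor
    · rintro ⟨hu, hu0, -⟩; exact ⟨hu0, hu⟩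
    · rintro ⟨hu0, hu⟩; exact ⟨hu, hu0, hu.le.trans hc.2⟩
  rw [show {ω | U ω < c} = U ⁻¹' Iio c from rfl, ← map_measureReal_apply hUm measurableSet_Iio, hU,
    measureReal_restrict_apply measurableSet_Iio, hIio, Real.volume_real_Ico_of_le hc.1, sub_zero]

section Threshold

variable {X : Type*} [MeasurableSpace X] {μ : Measure X} {p : X → ℝ}

lemma measureReal_lt_le_of_forall_gt [IsFiniteMeasure μ] {t c : ℝ}
    (h : ∀ u, t < u → μ.real {x | u < p x} ≤ c) : μ.real {x | t < p x} ≤ c := by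
  obtain ⟨u, hu_anti, hu_gt, hu_lim⟩ := exists_seq_strictAnti_tendsto t
  have hunion : {x | t < p x} = ⋃ n, {x | u n < p x} := by
    ext x
    simp only [mem_ofPred_eq, mem_iUnion]
    exact ⟨fun hx => (hu_lim.eventually (gt_mem_nhds hx)).exists,
      fun ⟨n, hn⟩ => (hu_gt n).trans hn⟩
  have hmono : Monotone fun n => {x | u n < p x} :=
    fun m n hmn x hx => (hu_anti.antitone hmn).trans_lt hx
  have hlim := (ENNReal.tendsto_toReal (measure_ne_top μ _)).comp
    (tendsto_measure_iUnion_atTop (μ := μ) hmono)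
  rw [← hunion] at hlim
  exact le_of_tendsto' hlim fun n => h _ (hu_gt n)

lemma le_measureReal_le_of_forall_lt [IsFiniteMeasure μ] (hp : Measurable p) {t c : ℝ}
    (h : ∀ u < t, c ≤ μ.real {x | u < p x}) : c ≤ μ.real {x | t ≤ p x} := by
  obtain ⟨u, hu_mono, hu_lt, hu_lim⟩ := exists_seq_strictMono_tendsto t
  have hinter : {x | t ≤ p x} = ⋂ n, {x | u n < p x} := by
    ext x
    simp only [mem_ofPred_eq, mem_iInter]
    exact ⟨fun hx n => (hu_lt n).trans_le hx, fun hx => le_of_tendsto' hu_lim fun n => (hx n).le⟩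
  have hanti : Antitone fun n => {x | u n < p x} :=
    fun m n hmn x hx => (hu_mono.monotone hmn).trans_lt hx
  have hlim := (ENNReal.tendsto_toReal (measure_ne_top μ _)).comp
    (tendsto_measure_iInter_atTop (μ := μ)
      (fun n => (measurableSet_lt measurable_const hp).nullMeasurableSet) hanti
      ⟨0, measure_ne_top μ _⟩)
  rw [← hinter] at hlim
  exact ge_of_tendsto' hlim fun n => h _ (hu_lt n)

variable [IsProbabilityMeasure μ]

lemma exists_threshold (hp : Measurable p) (hp01 : ∀ x, p x ∈ Icc 0 1) {a : ℝ}
    (ha : a ∈ Icc 0 1) : ∃ t, μ.real {x | t < p x} ≤ a ∧ a ≤ μ.real {x | t ≤ p x} := by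
  set F := {u : ℝ | 0 ≤ u ∧ μ.real {x | u < p x} ≤ a}
  have hF1 : (1 : ℝ) ∈ F := by
    have : {x | 1 < p x} = ∅ := eq_empty_of_forall_notMem fun x hx => (hp01 x).2.not_gt hx
    simp [F, this, ha.1]
  have hFbdd : BddBelow F := ⟨0, fun u hu => hu.1⟩
  refine ⟨sInf F, measureReal_lt_le_of_forall_gt fun u hu => ?_,
    le_measureReal_le_of_forall_lt hp fun u hu => ?_⟩
  · obtain ⟨q, hqF, hqu⟩ := exists_lt_of_csInf_lt ⟨1, hF1⟩ hu
    exact (measureReal_mono fun x hx => hqu.trans hx).trans hqF.2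
  · by_cases hu0 : u < 0
    · have : {x | u < p x} = univ := eq_univ_of_forall fun x => hu0.trans_le (hp01 x).1
      simp [this, ha.2]
    · have hnotF : u ∉ F := notMem_of_lt_csInf hu hFbdd
      simp only [F, mem_ofPred_eq, not_and, not_le] at hnotF
      exact (hnotF (not_lt.1 hu0)).le

lemma exists_fractional_superlevel (hp : Measurable p) (hp01 : ∀ x, p x ∈ Icc 0 1) {a : ℝ}
    (ha : a ∈ Icc 0 1) :
    ∃ d : X → ℝ, Integrable d μ ∧ (∀ x, d x ∈ Icc 0 1) ∧ ∫ x, d x ∂μ = a ∧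
      ∃ t, ∀ x, (t < p x → d x = 1) ∧ (p x < t → d x = 0) := by
  obtain ⟨t, hlt, hle⟩ := exists_threshold (μ := μ) hp hp01 ha
  obtain ⟨θ, hθ, hθa⟩ : a ∈ (fun θ : ℝ => (1 - θ) • μ.real {x | t < p x} +
      θ • μ.real {x | t ≤ p x}) '' Icc 0 1 := by
    rw [← segment_eq_image]; exact Icc_subset_segment ⟨hlt, hle⟩
  have hlt_meas : MeasurableSet {x | t < p x} := measurableSet_lt measurable_const hp
  have hle_meas : MeasurableSet {x | t ≤ p x} := measurableSet_le measurable_const hp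
  have hind {s : Set X} (hs : MeasurableSet s) : Integrable (s.indicator (1 : X → ℝ)) μ :=
    (integrable_indicator_iff hs).2 (integrable_const 1).integrableOn
  refine ⟨fun x => (1 - θ) * {x | t < p x}.indicator 1 x + θ * {x | t ≤ p x}.indicator 1 x,
    ((hind hlt_meas).const_mul _).add ((hind hle_meas).const_mul _), fun x => ?_, ?_,
    t, fun x => ⟨fun hx => ?_, fun hx => ?_⟩⟩
  · by_cases h1 : t < p x <;> by_cases h2 : t ≤ p x <;>
      simp [h1, h2, hθ.1, hθ.2]
  · rw [integral_add ((hind hlt_meas).const_mul _) ((hind hle_meas).const_mul _),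
      integral_const_mul, integral_const_mul, integral_indicator_one hlt_meas,
      integral_indicator_one hle_meas]
    exact hθa
  · simp [hx, hx.le]
  · simp [hx.not_ge, hx.le]

end Threshold

section Interpolation

variable (φ : ℝ → ℝ) (N : ℕ)

noncomputable def gridSlope (j : ℕ) : ℝ := N * (φ ((j + 1) / N) - φ (j / N))

noncomputable def hingeCoeff : ℕ → ℝ
  | 0 => gridSlope φ N 0
  | j + 1 => gridSlope φ N (j + 1) - gridSlope φ N j

/-- For `x ≥ 0` the `j = 0` hinge is `x` itself, so `hingeCoeff φ N 0` is the slope on the first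
cell and the other coefficients are slope increments, nonnegative when `φ` is convex. -/
noncomputable def gridInterpolant (x : ℝ) : ℝ :=
  φ 0 + ∑ j ∈ Finset.range N, hingeCoeff φ N j * max (x - j / N) 0

variable {φ N}

lemma sum_hingeCoeff_mul (hN : N ≠ 0) (k : ℕ) (x : ℝ) :
    φ 0 + ∑ j ∈ Finset.range (k + 1), hingeCoeff φ N j * (x - j / N)
      = φ (k / N) + gridSlope φ N k * (x - k / N) := by
  have hN' : (N : ℝ) ≠ 0 := Nat.cast_ne_zero.2 hN
  induction k with
  | zero => simp [hingeCoeff, gridSlope]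
  | succ k ih =>
    rw [Finset.sum_range_succ, ← add_assoc, ih]
    simp only [hingeCoeff, gridSlope]
    push_cast
    field_simp
    ring

lemma gridInterpolant_eq (hN : N ≠ 0) {k : ℕ} (hk : k < N) {x : ℝ} (h1 : k / N ≤ x)
    (h2 : x ≤ (k + 1) / N) :
    gridInterpolant φ N x = (k + 1 - N * x) * φ (k / N) + (N * x - k) * φ ((k + 1) / N) := by
  have hN' : (0 : ℝ) < N := by positivity
  have hhigh : ∀ j ∈ Finset.range N, j ∉ Finset.range (k + 1) →
      hingeCoeff φ N j * max (x - j / N) 0 = 0 := by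
    intro j _ hj
    have : x ≤ j / N :=
      h2.trans (by gcongr; exact_mod_cast not_lt.1 (Finset.mem_range.not.1 hj))
    rw [max_eq_right (by linarith), mul_zero]
  have hlow : ∀ j ∈ Finset.range (k + 1), max (x - j / N) 0 = x - j / N := by
    intro j hj
    have : (j : ℝ) / N ≤ x :=
      le_trans (by gcongr; exact_mod_cast Nat.lt_succ_iff.1 (Finset.mem_range.1 hj)) h1
    exact max_eq_left (by linarith)
  rw [gridInterpolant, ← Finset.sum_subset (Finset.range_subset_range.2 hk) hhigh,
    Finset.sum_congr rfl fun j hj => by rw [hlow j hj], sum_hingeCoeff_mul hN, gridSlope]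
  field_simp
  ring

lemma exists_cell (hN : N ≠ 0) {x : ℝ} (hx : x ∈ Icc 0 1) :
    ∃ k < N, k / N ≤ x ∧ x ≤ (k + 1) / N := by
  have hN' : (0 : ℝ) < N := by positivity
  refine ⟨min ⌊x * N⌋₊ (N - 1), by omega, ?_, ?_⟩
  · rw [div_le_iff₀ hN']
    exact (Nat.cast_le.2 (min_le_left _ _)).trans (Nat.floor_le (by nlinarith [hx.1]))
  · rw [le_div_iff₀ hN']
    rcases le_total ⌊x * N⌋₊ (N - 1) with h | h
    · rw [min_eq_left h]
      exact (Nat.lt_floor_add_one (x * N)).le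
    · rw [min_eq_right h, Nat.cast_sub (Nat.one_le_iff_ne_zero.2 hN), Nat.cast_one,
        sub_add_cancel]
      nlinarith [hx.2]

lemma div_natCast_mem_Icc {i : ℝ} (hi0 : 0 ≤ i) (hiN : i ≤ N) : i / N ∈ Icc (0 : ℝ) 1 :=
  ⟨by positivity, div_le_one_of_le₀ hiN (Nat.cast_nonneg N)⟩

lemma ConvexOn.le_gridInterpolant (hφ : ConvexOn ℝ (Icc 0 1) φ) (hN : N ≠ 0) {x : ℝ}
    (hx : x ∈ Icc 0 1) : φ x ≤ gridInterpolant φ N x := by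
  obtain ⟨k, hk, h1, h2⟩ := exists_cell hN hx
  have hN' : (0 : ℝ) < N := by positivity
  have hkN : (k : ℝ) + 1 ≤ N := by exact_mod_cast hk
  rw [gridInterpolant_eq hN hk h1 h2]
  rw [div_le_iff₀ hN'] at h1
  rw [le_div_iff₀ hN'] at h2
  have hpt : (k + 1 - N * x) • ((k : ℝ) / N) + (N * x - k) • (((k : ℝ) + 1) / N) = x := by
    simp only [smul_eq_mul]; field_simp; ring
  have hchord := hφ.2 (div_natCast_mem_Icc k.cast_nonneg (by linarith))
    (div_natCast_mem_Icc (by positivity) hkN) (by linarith : (0 : ℝ) ≤ k + 1 - N * x)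
    (by linarith : (0 : ℝ) ≤ N * x - k) (by ring)
  rwa [hpt, smul_eq_mul, smul_eq_mul] at hchord

lemma gridInterpolant_le (hN : N ≠ 0) {x c : ℝ} (hx : x ∈ Icc 0 1)
    (h : ∀ y ∈ Icc (0 : ℝ) 1, |y - x| ≤ 1 / N → φ y ≤ c) : gridInterpolant φ N x ≤ c := by
  obtain ⟨k, hk, h1, h2⟩ := exists_cell hN hx
  have hkN : (k : ℝ) + 1 ≤ N := by exact_mod_cast hk
  have hstep : ((k : ℝ) + 1) / N = k / N + 1 / N := add_div _ _ _
  have hN1 : 0 < 1 / (N : ℝ) := by positivity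
  have hleft := h _ (div_natCast_mem_Icc k.cast_nonneg (by linarith))
    (abs_le.2 ⟨by linarith, by linarith⟩)
  have hright := h _ (div_natCast_mem_Icc (by positivity) hkN)
    (abs_le.2 ⟨by linarith, by linarith⟩)
  have hN' : (0 : ℝ) < N := by positivity
  rw [gridInterpolant_eq hN hk h1 h2]
  rw [div_le_iff₀ hN'] at h1
  rw [le_div_iff₀ hN'] at h2
  nlinarith

lemma ConvexOn.hingeCoeff_succ_nonneg (hφ : ConvexOn ℝ (Icc 0 1) φ) {j : ℕ} (hj : j + 1 < N) :
    0 ≤ hingeCoeff φ N (j + 1) := by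
  have hN : N ≠ 0 := by omega
  have hN' : (0 : ℝ) < N := by positivity
  have hjN : (j : ℝ) + 2 ≤ N := by exact_mod_cast hj
  have hmid := hφ.2 (div_natCast_mem_Icc j.cast_nonneg (by linarith))
    (div_natCast_mem_Icc (by positivity) hjN) (by norm_num : (0 : ℝ) ≤ 1 / 2)
    (by norm_num : (0 : ℝ) ≤ 1 / 2) (by norm_num)
  have hpt : (1 / 2 : ℝ) • ((j : ℝ) / N) + (1 / 2 : ℝ) • (((j : ℝ) + 2) / N)
      = ((j : ℝ) + 1) / N := by
    simp only [smul_eq_mul]; field_simp; ring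
  rw [hpt, smul_eq_mul, smul_eq_mul] at hmid
  simp only [hingeCoeff, gridSlope]
  push_cast
  rw [show (j : ℝ) + 1 + 1 = j + 2 by ring]
  nlinarith

end Interpolation

section ConvexOrder

variable {Ω Ω' : Type*} [MeasurableSpace Ω] [MeasurableSpace Ω'] {ℙ : Measure Ω} {ℙ' : Measure Ω'}
  {Y : Ω → ℝ} {Z : Ω' → ℝ}

lemma Continuous.integrable_comp_of_ae_mem [IsFiniteMeasure ℙ] {f : ℝ → ℝ} (hf : Continuous f)
    {K : Set ℝ} (hK : IsCompact K) (hY : AEMeasurable Y ℙ) (hYK : ∀ᵐ ω ∂ℙ, Y ω ∈ K) :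
    Integrable (fun ω => f (Y ω)) ℙ := by
  obtain ⟨C, hC⟩ := hK.exists_bound_of_continuousOn hf.continuousOn
  exact .of_bound (hf.comp_aestronglyMeasurable hY.aestronglyMeasurable) C
    (hYK.mono fun ω hω => hC _ hω)

lemma continuous_gridInterpolant (φ : ℝ → ℝ) (N : ℕ) : Continuous (gridInterpolant φ N) := by
  unfold gridInterpolant
  fun_prop

variable [IsProbabilityMeasure ℙ]

lemma integral_gridInterpolant_comp (φ : ℝ → ℝ) (N : ℕ) (hY : AEMeasurable Y ℙ)
    (hY01 : ∀ᵐ ω ∂ℙ, Y ω ∈ Icc 0 1) :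
    ∫ ω, gridInterpolant φ N (Y ω) ∂ℙ
      = φ 0 + ∑ j ∈ Finset.range N, hingeCoeff φ N j * ∫ ω, max (Y ω - j / N) 0 ∂ℙ := by
  have hint : ∀ j ∈ Finset.range N,
      Integrable (fun ω => hingeCoeff φ N j * max (Y ω - j / N) 0) ℙ := fun j _ =>
    ((continuous_id.sub continuous_const).max continuous_const).integrable_comp_of_ae_mem
      isCompact_Icc hY hY01 |>.const_mul _
  simp only [gridInterpolant]
  rw [integral_add (integrable_const _) (integrable_finsetSum _ hint), integral_const,
    integral_finsetSum _ hint]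
  simp [integral_const_mul]

variable [IsProbabilityMeasure ℙ']

lemma ConvexOn.integral_gridInterpolant_le {φ : ℝ → ℝ} (hφ : ConvexOn ℝ (Icc 0 1) φ) (N : ℕ)
    (hY : AEMeasurable Y ℙ) (hZ : AEMeasurable Z ℙ')
    (hY01 : ∀ᵐ ω ∂ℙ, Y ω ∈ Icc 0 1) (hZ01 : ∀ᵐ ω ∂ℙ', Z ω ∈ Icc 0 1)
    (hmean : ∫ ω, Y ω ∂ℙ = ∫ ω, Z ω ∂ℙ')
    (hsl : ∀ a ∈ Icc (0 : ℝ) 1, ∫ ω, max (Y ω - a) 0 ∂ℙ ≤ ∫ ω, max (Z ω - a) 0 ∂ℙ') :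
    ∫ ω, gridInterpolant φ N (Y ω) ∂ℙ ≤ ∫ ω, gridInterpolant φ N (Z ω) ∂ℙ' := by
  rw [integral_gridInterpolant_comp φ N hY hY01, integral_gridInterpolant_comp φ N hZ hZ01]
  rcases N with _ | n
  · simp
  rw [Finset.sum_range_succ', Finset.sum_range_succ']
  have hY0 : ∫ ω, max (Y ω - (0 : ℕ) / (n + 1 : ℕ)) 0 ∂ℙ = ∫ ω, Y ω ∂ℙ :=
    integral_congr_ae (hY01.mono fun ω hω => by simp [hω.1])
  have hZ0 : ∫ ω, max (Z ω - (0 : ℕ) / (n + 1 : ℕ)) 0 ∂ℙ' = ∫ ω, Z ω ∂ℙ' :=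
    integral_congr_ae (hZ01.mono fun ω hω => by simp [hω.1])
  rw [hY0, hZ0, hmean]
  gcongr with j hj
  · exact hφ.hingeCoeff_succ_nonneg (by simpa using Finset.mem_range.1 hj)
  · exact hsl _ (div_natCast_mem_Icc (by positivity)
      (by have := Finset.mem_range.1 hj; exact_mod_cast (by omega : j + 1 ≤ n + 1)))

theorem ConvexOn.integral_comp_le_of_integral_max_sub_le {φ : ℝ → ℝ}
    (hφ : ConvexOn ℝ univ φ) (hY : AEMeasurable Y ℙ) (hZ : AEMeasurable Z ℙ')
    (hY01 : ∀ᵐ ω ∂ℙ, Y ω ∈ Icc 0 1) (hZ01 : ∀ᵐ ω ∂ℙ', Z ω ∈ Icc 0 1)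
    (hmean : ∫ ω, Y ω ∂ℙ = ∫ ω, Z ω ∂ℙ')
    (hsl : ∀ a ∈ Icc (0 : ℝ) 1, ∫ ω, max (Y ω - a) 0 ∂ℙ ≤ ∫ ω, max (Z ω - a) 0 ∂ℙ') :
    ∫ ω, φ (Y ω) ∂ℙ ≤ ∫ ω, φ (Z ω) ∂ℙ' := by
  have hφc : Continuous φ := continuousOn_univ.1 (hφ.continuousOn isOpen_univ)
  have hφ01 : ConvexOn ℝ (Icc 0 1) φ := hφ.subset (subset_univ _) (convex_Icc 0 1)
  refine le_of_forall_pos_le_add fun ε hε => ?_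
  obtain ⟨δ, hδ, hφδ⟩ := Metric.uniformContinuousOn_iff.1
    ((isCompact_Icc (a := 0) (b := 1)).uniformContinuousOn_of_continuous hφc.continuousOn) ε hε
  obtain ⟨n, hn⟩ := exists_nat_one_div_lt hδ
  have hN : n + 1 ≠ 0 := n.succ_ne_zero
  have hintY {f : ℝ → ℝ} (hf : Continuous f) : Integrable (fun ω => f (Y ω)) ℙ :=
    hf.integrable_comp_of_ae_mem isCompact_Icc hY hY01
  have hintZ {f : ℝ → ℝ} (hf : Continuous f) : Integrable (fun ω => f (Z ω)) ℙ' :=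
    hf.integrable_comp_of_ae_mem isCompact_Icc hZ hZ01
  calc ∫ ω, φ (Y ω) ∂ℙ ≤ ∫ ω, gridInterpolant φ (n + 1) (Y ω) ∂ℙ :=
        integral_mono_ae (hintY hφc) (hintY (continuous_gridInterpolant _ _))
          (hY01.mono fun ω hω => hφ01.le_gridInterpolant hN hω)
    _ ≤ ∫ ω, gridInterpolant φ (n + 1) (Z ω) ∂ℙ' :=
        hφ01.integral_gridInterpolant_le _ hY hZ hY01 hZ01 hmean hsl
    _ ≤ ∫ ω, (φ (Z ω) + ε) ∂ℙ' := by
        refine integral_mono_ae (hintZ (continuous_gridInterpolant _ _))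
          ((hintZ hφc).add (integrable_const ε)) (hZ01.mono fun ω hω => ?_)
        refine gridInterpolant_le hN hω fun y hy hyω => ?_
        have hdist : dist y (Z ω) < δ := by
          rw [Real.dist_eq]; push_cast at hyω; linarith
        linarith [(abs_lt.1 (Real.dist_eq _ _ ▸ hφδ y hy (Z ω) hω hdist)).2]
    _ = ∫ ω, φ (Z ω) ∂ℙ' + ε := by
        rw [integral_add (hintZ hφc) (integrable_const ε), integral_const]
        simp

end ConvexOrder

section Comonotone

variable {Ω Ω' X : Type*} [MeasurableSpace Ω] [MeasurableSpace Ω'] [MeasurableSpace X]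
  {ℙ : Measure Ω} {ℙ' : Measure Ω'} {μ : Measure X}
  [IsProbabilityMeasure ℙ] [IsProbabilityMeasure ℙ'] [IsProbabilityMeasure μ]
  {A : Set (Ω × X)} {p : X → ℝ} {U : Ω' → ℝ}

lemma measurable_of_measureReal_section_eq (hA : MeasurableSet A)
    (hp : ∀ x, ℙ.real ((·, x) ⁻¹' A) = p x) : Measurable p := by
  rw [← funext hp]
  exact (measurable_measure_prodMk_right hA).ennreal_toReal

lemma measurableSet_comonotone (hA : MeasurableSet A) (hp : ∀ x, ℙ.real ((·, x) ⁻¹' A) = p x)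
    (hUm : Measurable U) : MeasurableSet {z : Ω' × X | U z.1 < p z.2} :=
  measurableSet_lt (hUm.comp measurable_fst)
    ((measurable_of_measureReal_section_eq hA hp).comp measurable_snd)

theorem integral_measureReal_eq_comonotone (hA : MeasurableSet A)
    (hp : ∀ x, ℙ.real ((·, x) ⁻¹' A) = p x) (hUm : Measurable U)
    (hU : ℙ'.map U = volume.restrict (Icc 0 1)) :
    ∫ ω, μ.real (Prod.mk ω ⁻¹' A) ∂ℙ = ∫ ω, μ.real {x | U ω < p x} ∂ℙ' := by
  rw [integral_measureReal_prodMk_left hA]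
  refine Eq.trans ?_ (integral_measureReal_prodMk_left (measurableSet_comonotone hA hp hUm)).symm
  have hp01 (x : X) : p x ∈ Icc 0 1 := hp x ▸ measureReal_mem_Icc _
  simp only [hp, preimage_ofPred_eq, measureReal_lt_of_map_eq_uniform hUm hU, hp01]

theorem integral_max_measureReal_sub_le_comonotone (hA : MeasurableSet A)
    (hp : ∀ x, ℙ.real ((·, x) ⁻¹' A) = p x) (hUm : Measurable U)
    (hU : ℙ'.map U = volume.restrict (Icc 0 1)) {a : ℝ} (ha : a ∈ Icc 0 1) :
    ∫ ω, max (μ.real (Prod.mk ω ⁻¹' A) - a) 0 ∂ℙ ≤ ∫ ω, max (μ.real {x | U ω < p x} - a) 0 ∂ℙ' := by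
  have hp01 (x : X) : p x ∈ Icc 0 1 := hp x ▸ measureReal_mem_Icc _
  obtain ⟨d, hdi, hd01, rfl, t, ht⟩ :=
    exists_fractional_superlevel (μ := μ) (measurable_of_measureReal_section_eq hA hp) hp01 ha
  have hsign (ω : Ω') : (∀ x, d x ≤ {z : Ω' × X | U z.1 < p z.2}.indicator 1 (ω, x)) ∨
      (∀ x, {z : Ω' × X | U z.1 < p z.2}.indicator 1 (ω, x) ≤ d x) := by
    rcases lt_or_ge (U ω) t with hUt | hUt
    · refine Or.inl fun x => ?_
      by_cases hx : U ω < p x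
      · simpa [hx] using (hd01 x).2
      · simp [hx, (ht x).2 (by linarith)]
    · refine Or.inr fun x => ?_
      by_cases hx : U ω < p x
      · simp [hx, (ht x).1 (by linarith)]
      · simpa [hx] using (hd01 x).1
  calc _ ≤ ∫ x, (1 - d x) * ℙ.real ((·, x) ⁻¹' A) ∂μ :=
        integral_max_measureReal_sub_le hA hdi hd01
    _ = ∫ x, (1 - d x) * ℙ'.real ((·, x) ⁻¹' {z : Ω' × X | U z.1 < p z.2}) ∂μ := by
        simp only [hp, preimage_ofPred_eq, measureReal_lt_of_map_eq_uniform hUm hU, hp01]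
    _ = _ := (integral_max_measureReal_sub_eq (measurableSet_comonotone hA hp hUm) hdi hd01
        (.of_forall hsign)).symm

end Comonotone

theorem stmt_4_general
    {Ω Ω' X : Type*} [MeasurableSpace Ω] [MeasurableSpace Ω'] [MeasurableSpace X]
    (ℙ : Measure Ω) [IsProbabilityMeasure ℙ]
    (ℙ' : Measure Ω') [IsProbabilityMeasure ℙ']
    (μ : Measure X) [IsProbabilityMeasure μ]
    (ξ : Ω × X → ℝ) (hξ : Measurable ξ) (T : ℝ)
    (U : Ω' → ℝ) (hUm : Measurable U)
    (hU : Measure.map U ℙ' = volume.restrict (Set.Icc (0:ℝ) 1))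
    (S : Ω → ℝ) (hS : ∀ ω, S ω = (μ {x | T < ξ (ω, x)}).toReal)
    (p : X → ℝ) (hp : ∀ x, p x = (ℙ {ω | T < ξ (ω, x)}).toReal)
    (R : Ω' → ℝ) (hR : ∀ ω, R ω = (μ {x | U ω < p x}).toReal)
    (φ : ℝ → ℝ) (hφ : ConvexOn ℝ Set.univ φ) :
    ∫ ω, φ (S ω) ∂ℙ ≤ ∫ ω, φ (R ω) ∂ℙ' := by
  have hA : MeasurableSet {z : Ω × X | T < ξ z} := measurableSet_lt measurable_const hξ
  have hpA (x : X) : ℙ.real ((·, x) ⁻¹' {z : Ω × X | T < ξ z}) = p x := (hp x).symm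
  obtain rfl : S = fun ω => μ.real (Prod.mk ω ⁻¹' {z : Ω × X | T < ξ z}) := funext hS
  obtain rfl : R = fun ω => μ.real {x | U ω < p x} := funext hR
  exact hφ.integral_comp_le_of_integral_max_sub_le
    (measurable_measure_prodMk_left hA).ennreal_toReal.aemeasurable
    (measurable_measure_prodMk_left
      (measurableSet_comonotone hA hpA hUm)).ennreal_toReal.aemeasurable
    (.of_forall fun _ => measureReal_mem_Icc _) (.of_forall fun _ => measureReal_mem_Icc _)
    (integral_measureReal_eq_comonotone hA hpA hUm hU)
    fun a ha => integral_max_measureReal_sub_le_comonotone hA hpA hUm hU ha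

theorem stmt_4
    {Ω Ω' X : Type*} [MeasurableSpace Ω] [MeasurableSpace Ω'] [MeasurableSpace X]
    (ℙ : Measure Ω) [IsProbabilityMeasure ℙ]
    (ℙ' : Measure Ω') [IsProbabilityMeasure ℙ']
    (μ : Measure X) [IsProbabilityMeasure μ]
    (ξ : Ω × X → ℝ) (hξ : Measurable ξ) (T : ℝ)
    (U : Ω' → ℝ) (hUm : Measurable U)
    (hU : Measure.map U ℙ' = volume.restrict (Set.Icc (0:ℝ) 1))
    (S : Ω → ℝ) (hS : ∀ ω, S ω = (μ {x | T < ξ (ω, x)}).toReal)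
    (p : X → ℝ) (hp : ∀ x, p x = (ℙ {ω | T < ξ (ω, x)}).toReal)
    (R : Ω' → ℝ) (hR : ∀ ω, R ω = (μ {x | U ω < p x}).toReal)
    (φ : ℝ → ℝ) (hφ : ConvexOn ℝ Set.univ φ)
    (hφS : Integrable (fun ω => φ (S ω)) ℙ)
    (hφR : Integrable (fun ω => φ (R ω)) ℙ') :
    ∫ ω, φ (S ω) ∂ℙ ≤ ∫ ω, φ (R ω) ∂ℙ' :=
  stmt_4_general ℙ ℙ' μ ξ hξ T U hUm hU S hS p hp R hR φ hφ
end

section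
/- Let p : X → [0,1] be measurable on a probability space (X, P_X), U uniform on [0,1], and R = ∫_X 1_{p(x) > U} P_X(dx). Then the quantile function of R satisfies F_R^{-1}(α) = ∫_X 1_{p(x) > 1−α} P_X(dx) for all α ∈ [0,1]. -/
/-!
Write `g u = μ {p > u}` for the survival function of `p`, so that `R = g ∘ U`; `g` is antitone
and right-continuous, being `1 - F` for the distribution function `F` of `p`. For `α > 0`,
`P(g(U) ≤ t) ≥ α` holds iff `g(1 - α) ≤ t`: if `g(1 - α) ≤ t` then `{U ≥ 1 - α} ⊆ {g(U) ≤ t}`,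
an event of probability `α`; if `g(1 - α) > t`, right-continuity gives `d > 1 - α` with
`g(d) > t`, so `{g(U) ≤ t} ⊆ {U ≥ d}`, an event of probability less than `α`.
The set of admissible `t` is thus `[g(1 - α), ∞)`, whose infimum is `g(1 - α)`.
-/

open MeasureTheory Set

section

variable {Ω : Type*} [MeasurableSpace Ω] {P : Measure Ω} {U : Ω → ℝ}

lemma measureReal_le_of_map_eq_uniform (hUm : Measurable U)
    (hU : P.map U = volume.restrict (Icc 0 1)) {d : ℝ} (hd : 0 ≤ d) :
    P.real {ω | d ≤ U ω} = max (1 - d) 0 := by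
  have hinter : Ici d ∩ Icc 0 1 = Icc d 1 := by
    ext u
    simp only [mem_inter_iff, mem_Ici, mem_Icc]
    constructor
    · rintro ⟨hdu, -, hu1⟩; exact ⟨hdu, hu1⟩
    · rintro ⟨hdu, hu1⟩; exact ⟨hdu, hd.trans hdu, hu1⟩
  change P.real (U ⁻¹' Ici d) = _
  rw [← map_measureReal_apply hUm measurableSet_Ici, hU,
    measureReal_restrict_apply measurableSet_Ici, hinter, Real.volume_real_Icc]

lemma setOf_le_measureReal_comp_le_eq_Ici [IsFiniteMeasure P] (hUm : Measurable U)
    (hU : P.map U = volume.restrict (Icc 0 1)) {g : ℝ → ℝ} (hg : Antitone g)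
    (hg_cont : ∀ u, ContinuousWithinAt g (Ici u) u) {α : ℝ} (hα0 : 0 < α) (hα1 : α ≤ 1) :
    {t | α ≤ P.real {ω | g (U ω) ≤ t}} = Ici (g (1 - α)) := by
  ext t
  simp only [mem_ofPred_eq, mem_Ici]
  refine ⟨fun ht => ?_, fun ht => ?_⟩
  · by_contra! hlt
    obtain ⟨d, hgd, hd⟩ : ∃ d, t < g d ∧ 1 - α < d :=
      (((hg_cont (1 - α)).eventually (lt_mem_nhds hlt)).filter_mono
        (nhdsWithin_mono _ Ioi_subset_Ici_self)).and self_mem_nhdsWithin |>.exists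
    have hsub : {ω | g (U ω) ≤ t} ⊆ {ω | d ≤ U ω} :=
      fun ω hω => (hg.reflect_lt (lt_of_le_of_lt hω hgd)).le
    have hle := (measureReal_mono hsub).trans_eq
      (measureReal_le_of_map_eq_uniform hUm hU (by linarith))
    have hlt' : max (1 - d) 0 < α := max_lt (by linarith) hα0
    linarith
  · calc α = P.real {ω | 1 - α ≤ U ω} := by
          rw [measureReal_le_of_map_eq_uniform hUm hU (by linarith), sub_sub_cancel,
            max_eq_left hα0.le]
      _ ≤ P.real {ω | g (U ω) ≤ t} := measureReal_mono fun ω hω => (hg hω).trans ht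

end

lemma measureReal_lt_eq_one_sub_cdf {X : Type*} [MeasurableSpace X] {μ : Measure X}
    [IsProbabilityMeasure μ] {p : X → ℝ} (hp : Measurable p) (u : ℝ) :
    μ.real {x | u < p x} = 1 - ProbabilityTheory.cdf (μ.map p) u := by
  have := Measure.isProbabilityMeasure_map (μ := μ) hp.aemeasurable
  rw [ProbabilityTheory.cdf_eq_real, ← probReal_compl_eq_one_sub measurableSet_Iic, compl_Iic,
    map_measureReal_apply hp measurableSet_Ioi]
  rfl

theorem stmt_7
    {Ω X : Type*} [MeasurableSpace Ω] [MeasurableSpace X]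
    (ℙ : Measure Ω) [IsProbabilityMeasure ℙ]
    (μ : Measure X) [IsProbabilityMeasure μ]
    (p : X → ℝ) (hpm : Measurable p) (hp01 : ∀ x, p x ∈ Set.Icc (0:ℝ) 1)
    (U : Ω → ℝ) (hUm : Measurable U)
    (hU : Measure.map U ℙ = volume.restrict (Set.Icc (0:ℝ) 1))
    (R : Ω → ℝ) (hR : ∀ ω, R ω = (μ {x | U ω < p x}).toReal) :
    ∀ α ∈ Set.Icc (0:ℝ) 1,
      sInf {t : ℝ | α ≤ (ℙ {ω | R ω ≤ t}).toReal}
        = (μ {x | 1 - α < p x}).toReal := by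
  rintro α ⟨hα0, hα1⟩
  rcases hα0.eq_or_lt with rfl | hα0
  -- Every `t` is admissible, and `sInf univ = 0` in `ℝ` by convention; `μ {p > 1} = 0` as well.
  · have hempty : {x | 1 < p x} = ∅ :=
      eq_empty_of_forall_notMem fun x hx => (hp01 x).2.not_gt hx
    simp [hempty]
  · have hRF : ∀ ω, R ω = 1 - ProbabilityTheory.cdf (μ.map p) (U ω) :=
      fun ω => (hR ω).trans (measureReal_lt_eq_one_sub_cdf hpm _)
    simp only [← measureReal_def, hRF, measureReal_lt_eq_one_sub_cdf hpm]
    rw [setOf_le_measureReal_comp_le_eq_Ici hUm hU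
      (fun a b hab => sub_le_sub_left ((ProbabilityTheory.cdf _).mono hab) 1)
      (fun u => continuousWithinAt_const.sub ((ProbabilityTheory.cdf _).right_continuous u))
      hα0 hα1, csInf_Ici]
end

section
/- Let S and R be random variables with values in [0,1] such that S ≤_cx R in the convex order, and set μ = E[S] = E[R]. Then for all α ∈ (0,1): (μ + α − 1)/α ≤ (1/α)∫_0^α F_R^{-1}(t) dt ≤ F_S^{-1}(α) ≤ (1/(1−α))∫_α^1 F_R^{-1}(t) dt ≤ μ/(1−α). -/
/-!
Represent each law on `ℝ` by its quantile function on `(0, 1)`: the quantile transform pushes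
Lebesgue measure on `(0, 1)` forward to the law, so `E[f(Y)] = ∫₀¹ f(F_Y⁻¹(p)) dp`.
The tail integral `∫_α^1 F_Y⁻¹` is the minimum over `x` of `(1 - α) x + E[(Y - x)⁺]`, attained at
`x = F_Y⁻¹(α)`. Applying the convex order to the convex functions `(· - x)⁺` therefore gives
`∫_α^1 F_S⁻¹ ≤ ∫_α^1 F_R⁻¹`, and applying it to `± id` gives `E[S] = E[R]`, hence the reverse
inequality on `(0, α)`. Monotonicity of `F_S⁻¹` and `0 ≤ F_R⁻¹ ≤ 1` yield the four bounds.
-/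

open MeasureTheory Set Filter

namespace ProbabilityTheory

/-- Outside `(0, 1)` the value is junk (`sInf` of `univ` or of `∅`), so the lemmas below are
stated for `p ∈ Ioo 0 1`. -/
noncomputable def quantile (μ : Measure ℝ) (p : ℝ) : ℝ := sInf {x | p ≤ cdf μ x}

section Quantile

variable {μ : Measure ℝ} {p x : ℝ}

lemma bddBelow_setOf_le_cdf (hp : 0 < p) : BddBelow {x | p ≤ cdf μ x} := by
  obtain ⟨x₀, hx₀⟩ := eventually_atBot.1 ((tendsto_order.1 (tendsto_cdf_atBot μ)).2 p hp)
  exact ⟨x₀, fun x hx => le_of_not_gt fun hlt => (hx₀ x hlt.le).not_ge hx⟩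

lemma nonempty_setOf_le_cdf (hp : p < 1) : {x | p ≤ cdf μ x}.Nonempty :=
  ((tendsto_order.1 (tendsto_cdf_atTop μ)).1 p hp).exists.imp fun _ => le_of_lt

lemma quantile_le_iff (hp : p ∈ Ioo 0 1) : quantile μ p ≤ x ↔ p ≤ cdf μ x := by
  refine ⟨fun h => (monotone_cdf μ h).trans' ?_, csInf_le (bddBelow_setOf_le_cdf hp.1)⟩
  have hright : ∀ y ∈ Ioi (quantile μ p), p ≤ cdf μ y := fun y hy => by
    obtain ⟨t, ht, hty⟩ := exists_lt_of_csInf_lt (nonempty_setOf_le_cdf hp.2) hy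
    exact ht.trans (monotone_cdf μ hty.le)
  exact ge_of_tendsto ((cdf μ).right_continuous _ |>.mono Ioi_subset_Ici_self)
    (eventually_nhdsWithin_of_forall hright)

lemma le_cdf_quantile (hp : p ∈ Ioo 0 1) : p ≤ cdf μ (quantile μ p) :=
  (quantile_le_iff hp).1 le_rfl

lemma monotoneOn_quantile : MonotoneOn (quantile μ) (Ioo 0 1) := fun _ hp _ hq hpq =>
  (quantile_le_iff hp).2 (hpq.trans (le_cdf_quantile hq))

lemma quantile_mem_Icc [IsProbabilityMeasure μ] {a b : ℝ} (h : ∀ᵐ x ∂μ, x ∈ Icc a b)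
    (hp : p ∈ Ioo 0 1) : quantile μ p ∈ Icc a b := by
  refine ⟨le_of_not_gt fun hlt => ?_, (quantile_le_iff hp).2 ?_⟩
  · have hnull : μ (Iic (quantile μ p)) = 0 :=
      measure_eq_zero_iff_ae_notMem.2 (h.mono fun x hx hx' => (hlt.trans_le hx.1).not_ge hx')
    have := le_cdf_quantile (μ := μ) hp
    rw [cdf_eq_real, measureReal_def, hnull] at this
    exact hp.1.not_ge this
  · have hnull : μ (Iic b)ᶜ = 0 :=
      measure_eq_zero_iff_ae_notMem.2 (h.mono fun x hx hx' => hx' hx.2)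
    rw [cdf_eq_real, measureReal_def, (prob_compl_eq_zero_iff measurableSet_Iic).1 hnull]
    exact hp.2.le.trans (by simp)

lemma aemeasurable_quantile : AEMeasurable (quantile μ) (volume.restrict (Ioo 0 1)) :=
  aemeasurable_restrict_of_monotoneOn measurableSet_Ioo monotoneOn_quantile

lemma map_quantile [IsProbabilityMeasure μ] :
    (volume.restrict (Ioo 0 1)).map (quantile μ) = μ := by
  refine (Measure.ext_of_Iic μ _ fun x => ?_).symm
  have hc : cdf μ x ≤ 1 := cdf_le_one μ x
  have hpre : quantile μ ⁻¹' Iic x ∩ Ioo 0 1 = Ioc 0 (cdf μ x) \ {1} := by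
    ext p
    simp only [mem_inter_iff, mem_preimage, mem_Iic, mem_Ioo, Set.mem_sdiff, mem_Ioc,
      mem_singleton_iff]
    constructor
    · rintro ⟨hq, hp⟩
      exact ⟨⟨hp.1, (quantile_le_iff hp).1 hq⟩, hp.2.ne⟩
    · rintro ⟨⟨hp0, hpx⟩, hp1⟩
      have hp : p ∈ Ioo 0 1 := ⟨hp0, lt_of_le_of_ne (hpx.trans hc) hp1⟩
      exact ⟨(quantile_le_iff hp).2 hpx, hp⟩
  rw [Measure.map_apply_of_aemeasurable aemeasurable_quantile measurableSet_Iic,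
    Measure.restrict_apply' measurableSet_Ioo, hpre, measure_sdiff_null Real.volume_singleton,
    Real.volume_Ioc, sub_zero, ofReal_cdf]

variable [IsProbabilityMeasure μ] {f : ℝ → ℝ}

lemma intervalIntegral_comp_quantile (hf : AEStronglyMeasurable f μ) :
    ∫ p in 0..1, f (quantile μ p) = ∫ x, f x ∂μ := by
  rw [intervalIntegral.integral_of_le zero_le_one, integral_Ioc_eq_integral_Ioo,
    ← integral_map aemeasurable_quantile (by rwa [map_quantile]), map_quantile]

lemma intervalIntegrable_comp_quantile (hf : Integrable f μ) {a b : ℝ} (ha : a ∈ Icc 0 1)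
    (hb : b ∈ Icc 0 1) : IntervalIntegrable (fun p => f (quantile μ p)) volume a b := by
  have hf' : Integrable f ((volume.restrict (Ioo 0 1)).map (quantile μ)) := by
    rwa [map_quantile]
  have h01 : IntervalIntegrable (fun p => f (quantile μ p)) volume 0 1 :=
    (intervalIntegrable_iff_integrableOn_Ioo_of_le zero_le_one).2
      ((integrable_map_measure hf'.aestronglyMeasurable aemeasurable_quantile).1 hf')
  exact h01.mono_set (by rw [uIcc_of_le zero_le_one]; exact uIcc_subset_Icc ha hb)

lemma intervalIntegrable_quantile (hμ : Integrable id μ) {a b : ℝ} (ha : a ∈ Icc 0 1)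
    (hb : b ∈ Icc 0 1) : IntervalIntegrable (quantile μ) volume a b :=
  intervalIntegrable_comp_quantile hμ ha hb

variable {α : ℝ}

lemma intervalIntegral_quantile_add (hμ : Integrable id μ) (hα : α ∈ Icc 0 1) :
    (∫ p in 0..α, quantile μ p) + ∫ p in α..1, quantile μ p = ∫ x, x ∂μ := by
  rw [intervalIntegral.integral_add_adjacent_intervals
      (intervalIntegrable_quantile hμ (by simp) hα)
      (intervalIntegrable_quantile hμ hα (by simp))]
  exact intervalIntegral_comp_quantile (f := id) hμ.aestronglyMeasurable

lemma intervalIntegral_quantile_le_mul (hμ : Integrable id μ) (hα : α ∈ Ioo 0 1) :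
    ∫ p in 0..α, quantile μ p ≤ α * quantile μ α := by
  calc ∫ p in 0..α, quantile μ p ≤ ∫ _ in 0..α, quantile μ α :=
        intervalIntegral.integral_mono_on_of_le_Ioo hα.1.le
          (intervalIntegrable_quantile hμ (by simp) (Ioo_subset_Icc_self hα))
          intervalIntegrable_const
          fun p hp => monotoneOn_quantile ⟨hp.1, hp.2.trans hα.2⟩ hα hp.2.le
    _ = α * quantile μ α := by simp

lemma mul_quantile_le_intervalIntegral (hμ : Integrable id μ) (hα : α ∈ Ioo 0 1) :
    (1 - α) * quantile μ α ≤ ∫ p in α..1, quantile μ p := by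
  calc (1 - α) * quantile μ α = ∫ _ in α..1, quantile μ α := by simp
    _ ≤ ∫ p in α..1, quantile μ p :=
        intervalIntegral.integral_mono_on_of_le_Ioo hα.2.le intervalIntegrable_const
          (intervalIntegrable_quantile hμ (Ioo_subset_Icc_self hα) (by simp))
          fun p hp => monotoneOn_quantile hα ⟨hα.1.trans hp.1, hp.2⟩ hp.1.le

lemma intervalIntegral_quantile_le_stopLoss (hμ : Integrable id μ) (hα : α ∈ Icc 0 1) (x : ℝ) :
    ∫ p in α..1, quantile μ p ≤ (1 - α) * x + ∫ y, max (y - x) 0 ∂μ := by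
  have hφ : Integrable (fun y => max (y - x) 0) μ := (hμ.sub (integrable_const x)).pos_part
  have hφQ : ∀ {a b : ℝ}, a ∈ Icc 0 1 → b ∈ Icc 0 1 →
      IntervalIntegrable (fun p => max (quantile μ p - x) 0) volume a b :=
    intervalIntegrable_comp_quantile hφ
  calc ∫ p in α..1, quantile μ p ≤ ∫ p in α..1, (x + max (quantile μ p - x) 0) :=
        intervalIntegral.integral_mono_on hα.2
          (intervalIntegrable_quantile hμ hα (by simp))
          (intervalIntegrable_const.add (hφQ hα (by simp)))
          fun p _ => by linarith [le_max_left (quantile μ p - x) 0]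
    _ = (1 - α) * x + ∫ p in α..1, max (quantile μ p - x) 0 := by
        rw [intervalIntegral.integral_add intervalIntegrable_const (hφQ hα (by simp)),
          intervalIntegral.integral_const, smul_eq_mul]
    _ ≤ (1 - α) * x + ∫ p in 0..1, max (quantile μ p - x) 0 := by
        rw [← intervalIntegral.integral_add_adjacent_intervals (a := 0) (b := α)
          (hφQ (by simp) hα) (hφQ hα (by simp))]
        gcongr
        exact le_add_of_nonneg_left
          (intervalIntegral.integral_nonneg hα.1 fun _ _ => le_max_right _ _)
    _ = (1 - α) * x + ∫ y, max (y - x) 0 ∂μ := by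
        rw [intervalIntegral_comp_quantile hφ.aestronglyMeasurable]

lemma intervalIntegral_quantile_eq_stopLoss (hμ : Integrable id μ) (hα : α ∈ Ioo 0 1) :
    ∫ p in α..1, quantile μ p =
      (1 - α) * quantile μ α + ∫ y, max (y - quantile μ α) 0 ∂μ := by
  have hφ : Integrable (fun y => max (y - quantile μ α) 0) μ :=
    (hμ.sub (integrable_const _)).pos_part
  have hα' := Ioo_subset_Icc_self hα
  have hhead : ∫ p in 0..α, max (quantile μ p - quantile μ α) 0 = 0 := by
    rw [intervalIntegral.integral_of_le hα.1.le, integral_Ioc_eq_integral_Ioo]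
    refine setIntegral_eq_zero_of_forall_eq_zero fun p hp => ?_
    exact max_eq_right (sub_nonpos.2 (monotoneOn_quantile ⟨hp.1, hp.2.trans hα.2⟩ hα hp.2.le))
  have htail : ∫ p in α..1, max (quantile μ p - quantile μ α) 0 =
      ∫ p in α..1, (quantile μ p - quantile μ α) := by
    simp only [intervalIntegral.integral_of_le hα.2.le, integral_Ioc_eq_integral_Ioo]
    refine setIntegral_congr_fun measurableSet_Ioo fun p hp => ?_
    exact max_eq_left (sub_nonneg.2 (monotoneOn_quantile hα ⟨hα.1.trans hp.1, hp.2⟩ hp.1.le))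
  rw [← intervalIntegral_comp_quantile hφ.aestronglyMeasurable,
    ← intervalIntegral.integral_add_adjacent_intervals
      (intervalIntegrable_comp_quantile hφ (by simp) hα')
      (intervalIntegrable_comp_quantile hφ hα' (by simp)),
    hhead, htail, intervalIntegral.integral_sub
      (intervalIntegrable_quantile hμ hα' (by simp)) intervalIntegrable_const,
    intervalIntegral.integral_const, smul_eq_mul]
  ring

end Quantile

def ConvexOrderLE (μ ν : Measure ℝ) : Prop :=
  ∀ φ : ℝ → ℝ, ConvexOn ℝ univ φ → Integrable φ μ → Integrable φ ν →
    ∫ x, φ x ∂μ ≤ ∫ x, φ x ∂ν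

namespace ConvexOrderLE

variable {μ ν : Measure ℝ}

lemma integral_id_eq (h : ConvexOrderLE μ ν) (hμ : Integrable id μ) (hν : Integrable id ν) :
    ∫ x, x ∂μ = ∫ x, x ∂ν := by
  refine le_antisymm (h id (convexOn_id convex_univ) hμ hν) ?_
  have : ∫ x, -x ∂μ ≤ ∫ x, -x ∂ν := h _ (concaveOn_id convex_univ).neg hμ.neg hν.neg
  rw [integral_neg, integral_neg] at this
  linarith

variable [IsProbabilityMeasure μ] [IsProbabilityMeasure ν] {α : ℝ}

lemma intervalIntegral_quantile_le (h : ConvexOrderLE μ ν) (hμ : Integrable id μ)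
    (hν : Integrable id ν) (hα : α ∈ Ioo 0 1) :
    ∫ p in α..1, quantile μ p ≤ ∫ p in α..1, quantile ν p := by
  set x := quantile ν α
  have hconvex : ConvexOn ℝ univ fun y => max (y - x) 0 :=
    ((convexOn_id convex_univ).sub (concaveOn_const x convex_univ)).sup
      (convexOn_const 0 convex_univ)
  calc ∫ p in α..1, quantile μ p ≤ (1 - α) * x + ∫ y, max (y - x) 0 ∂μ :=
        intervalIntegral_quantile_le_stopLoss hμ (Ioo_subset_Icc_self hα) x
    _ ≤ (1 - α) * x + ∫ y, max (y - x) 0 ∂ν :=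
        add_le_add_right (h _ hconvex (hμ.sub (integrable_const x)).pos_part
          (hν.sub (integrable_const x)).pos_part) _
    _ = ∫ p in α..1, quantile ν p := (intervalIntegral_quantile_eq_stopLoss hν hα).symm

theorem quantile_bounds (h : ConvexOrderLE μ ν) (hμ : Integrable id μ)
    (hν : ∀ᵐ x ∂ν, x ∈ Icc 0 1) (hα : α ∈ Ioo 0 1) :
    ((∫ x, x ∂ν) + α - 1) / α ≤ (1 / α) * ∫ p in 0..α, quantile ν p ∧
      (1 / α) * (∫ p in 0..α, quantile ν p) ≤ quantile μ α ∧
      quantile μ α ≤ (1 / (1 - α)) * ∫ p in α..1, quantile ν p ∧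
      (1 / (1 - α)) * (∫ p in α..1, quantile ν p) ≤ (∫ x, x ∂ν) / (1 - α) := by
  have hν' : Integrable id ν := .of_mem_Icc 0 1 aemeasurable_id hν
  have hα' := Ioo_subset_Icc_self hα
  have hsplitμ := intervalIntegral_quantile_add hμ hα'
  have hsplitν := intervalIntegral_quantile_add hν' hα'
  have hmean := h.integral_id_eq hμ hν'
  have htail := h.intervalIntegral_quantile_le hμ hν' hα
  have hheadμ := intervalIntegral_quantile_le_mul hμ hα
  have htailμ := mul_quantile_le_intervalIntegral hμ hα
  have htailν : ∫ p in α..1, quantile ν p ≤ 1 - α := by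
    simpa using intervalIntegral.integral_mono_on_of_le_Ioo hα.2.le
      (intervalIntegrable_quantile hν' hα' (by simp)) intervalIntegrable_const
      fun p hp => (quantile_mem_Icc hν ⟨hα.1.trans hp.1, hp.2⟩).2
  have hheadν : 0 ≤ ∫ p in 0..α, quantile ν p := by
    simpa using intervalIntegral.integral_mono_on_of_le_Ioo hα.1.le intervalIntegrable_const
      (intervalIntegrable_quantile hν' (by simp) hα')
      fun p hp => (quantile_mem_Icc hν ⟨hp.1, hp.2.trans hα.2⟩).1
  have h1α : 0 < 1 - α := sub_pos.2 hα.2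
  simp only [one_div_mul_eq_div]
  refine ⟨?_, ?_, ?_, ?_⟩
  · exact div_le_div_of_nonneg_right (by linarith) hα.1.le
  · rw [div_le_iff₀ hα.1]; linarith
  · rw [le_div_iff₀ h1α]; linarith
  · exact div_le_div_of_nonneg_right (by linarith) h1α.le

end ConvexOrderLE

section RandomVariable

variable {Ω : Type*} [MeasurableSpace Ω] {P : Measure Ω} {X Y : Ω → ℝ}

lemma cdf_map [IsProbabilityMeasure P] (hX : Measurable X) (t : ℝ) :
    cdf (P.map X) t = P.real {ω | X ω ≤ t} := by
  have := Measure.isProbabilityMeasure_map (μ := P) hX.aemeasurable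
  rw [cdf_eq_real, map_measureReal_apply hX measurableSet_Iic]
  rfl

lemma convexOrderLE_map (hX : Measurable X) (hY : Measurable Y)
    (h : ∀ φ : ℝ → ℝ, ConvexOn ℝ univ φ → Integrable (fun ω => φ (X ω)) P →
      Integrable (fun ω => φ (Y ω)) P → ∫ ω, φ (X ω) ∂P ≤ ∫ ω, φ (Y ω) ∂P) :
    ConvexOrderLE (P.map X) (P.map Y) := by
  intro φ hφ hφX hφY
  have hcont : Continuous φ := continuousOn_univ.1 (hφ.continuousOn isOpen_univ)
  rw [integral_map hX.aemeasurable hcont.aestronglyMeasurable,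
    integral_map hY.aemeasurable hcont.aestronglyMeasurable]
  exact h φ hφ ((integrable_map_measure hcont.aestronglyMeasurable hX.aemeasurable).1 hφX)
    ((integrable_map_measure hcont.aestronglyMeasurable hY.aemeasurable).1 hφY)

end RandomVariable

end ProbabilityTheory

open ProbabilityTheory

theorem stmt_9_general
    {Ω : Type*} [MeasurableSpace Ω] (P : Measure Ω) [IsProbabilityMeasure P]
    (S R : Ω → ℝ) (hSm : Measurable S) (hRm : Measurable R)
    (hS01 : ∀ ω, S ω ∈ Set.Icc (0:ℝ) 1) (hR01 : ∀ ω, R ω ∈ Set.Icc (0:ℝ) 1)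
    (hcx : ∀ φ : ℝ → ℝ, ConvexOn ℝ Set.univ φ →
      Integrable (fun ω => φ (S ω)) P → Integrable (fun ω => φ (R ω)) P →
      ∫ ω, φ (S ω) ∂P ≤ ∫ ω, φ (R ω) ∂P)
    (FS FR : ℝ → ℝ)
    (hFS : ∀ a, FS a = sInf {t : ℝ | a ≤ (P {ω | S ω ≤ t}).toReal})
    (hFR : ∀ a, FR a = sInf {t : ℝ | a ≤ (P {ω | R ω ≤ t}).toReal})
    (c : ℝ) (hcR : c = ∫ ω, R ω ∂P) :
    ∀ α ∈ Set.Ioo (0:ℝ) 1,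
      (c + α - 1) / α ≤ (1 / α) * ∫ t in (0:ℝ)..α, FR t ∧
      (1 / α) * (∫ t in (0:ℝ)..α, FR t) ≤ FS α ∧
      FS α ≤ (1 / (1 - α)) * ∫ t in α..(1:ℝ), FR t ∧
      (1 / (1 - α)) * (∫ t in α..(1:ℝ), FR t) ≤ c / (1 - α) := by
  intro α hα
  have := Measure.isProbabilityMeasure_map (μ := P) hSm.aemeasurable
  have := Measure.isProbabilityMeasure_map (μ := P) hRm.aemeasurable
  have hS : ∀ᵐ x ∂(P.map S), x ∈ Icc 0 1 :=
    (ae_map_iff hSm.aemeasurable measurableSet_Icc).2 (ae_of_all _ hS01)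
  have hR : ∀ᵐ x ∂(P.map R), x ∈ Icc 0 1 :=
    (ae_map_iff hRm.aemeasurable measurableSet_Icc).2 (ae_of_all _ hR01)
  obtain rfl : FS = quantile (P.map S) :=
    funext fun a => by simp only [hFS, quantile, cdf_map hSm, measureReal_def]
  obtain rfl : FR = quantile (P.map R) :=
    funext fun a => by simp only [hFR, quantile, cdf_map hRm, measureReal_def]
  obtain rfl : c = ∫ x, x ∂(P.map R) :=
    hcR.trans (integral_map hRm.aemeasurable aestronglyMeasurable_id).symm
  exact (convexOrderLE_map hSm hRm hcx).quantile_bounds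
    (.of_mem_Icc 0 1 aemeasurable_id hS) hR hα

theorem stmt_9
    {Ω : Type*} [MeasurableSpace Ω] (P : Measure Ω) [IsProbabilityMeasure P]
    (S R : Ω → ℝ) (hSm : Measurable S) (hRm : Measurable R)
    (hS01 : ∀ ω, S ω ∈ Set.Icc (0:ℝ) 1) (hR01 : ∀ ω, R ω ∈ Set.Icc (0:ℝ) 1)
    (hcx : ∀ φ : ℝ → ℝ, ConvexOn ℝ Set.univ φ →
      Integrable (fun ω => φ (S ω)) P → Integrable (fun ω => φ (R ω)) P →
      ∫ ω, φ (S ω) ∂P ≤ ∫ ω, φ (R ω) ∂P)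
    (FS FR : ℝ → ℝ)
    (hFS : ∀ a, FS a = sInf {t : ℝ | a ≤ (P {ω | S ω ≤ t}).toReal})
    (hFR : ∀ a, FR a = sInf {t : ℝ | a ≤ (P {ω | R ω ≤ t}).toReal})
    (c : ℝ) (hcS : c = ∫ ω, S ω ∂P) (hcR : c = ∫ ω, R ω ∂P) :
    ∀ α ∈ Set.Ioo (0:ℝ) 1,
      (c + α - 1) / α ≤ (1 / α) * ∫ t in (0:ℝ)..α, FR t ∧
      (1 / α) * (∫ t in (0:ℝ)..α, FR t) ≤ FS α ∧
      FS α ≤ (1 / (1 - α)) * ∫ t in α..(1:ℝ), FR t ∧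
      (1 / (1 - α)) * (∫ t in α..(1:ℝ), FR t) ≤ c / (1 - α) :=
  stmt_9_general P S R hSm hRm hS01 hR01 hcx FS FR hFS hFR c hcR
end

section
/- Let p : X → [0,1] be measurable and define, for each x ∈ X, η(x) = ∫_0^{p(x)} G(u) du − μ·p(x), where G(t) = ∫_X 1_{p(y) > t} P_X(dy) and μ = ∫_X p(y) P_X(dy). Then η(x) = (1 − p(x)) ∫_X p(y) 1_{p(y) ≤ p(x)} P_X(dy) + p(x) ∫_X (1 − p(y)) 1_{p(y) > p(x)} P_X(dy), provided P_X(p(y) = p(x)) = 0 for P_X-almost every x (absolute continuity of the law of p). -/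
/-!
Truncating the layer-cake formula at `q = p x` gives `∫₀^q G = ∫ min (p y) q dμ(y)`, so
`η x = ∫ (min (p y) q - q p y) dμ(y)`. The integrand equals `(1 - q) p y` where `p y ≤ q` and
`q (1 - p y)` where `p y > q`, which is the claimed identity.
-/

open MeasureTheory

namespace MeasureTheory

variable {X : Type*} [MeasurableSpace X] {μ : Measure X}

theorem measureReal_lt_min_eq_indicator (f : X → ℝ) (q t : ℝ) :
    μ.real {y | t < min (f y) q} = (Set.Iio q).indicator (fun t => μ.real {y | t < f y}) t := by
  by_cases htq : t < q <;> simp [htq]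

theorem integral_min_eq_intervalIntegral_measureReal_lt [IsFiniteMeasure μ] {f : X → ℝ}
    (hf : AEMeasurable f μ) (hf0 : 0 ≤ᵐ[μ] f) {q : ℝ} (hq : 0 ≤ q) :
    ∫ y, min (f y) q ∂μ = ∫ t in (0 : ℝ)..q, μ.real {y | t < f y} := by
  have hmin0 : 0 ≤ᵐ[μ] fun y => min (f y) q := hf0.mono fun y hy => le_min hy hq
  have hmin : Integrable (fun y => min (f y) q) μ :=
    .of_bound (hf.min aemeasurable_const).aestronglyMeasurable q <|
      hmin0.mono fun y hy => by simp [abs_of_nonneg hy]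
  rw [hmin.integral_eq_integral_meas_lt hmin0]
  simp_rw [measureReal_lt_min_eq_indicator f q]
  rw [setIntegral_indicator measurableSet_Iio, Set.Ioi_inter_Iio,
    intervalIntegral.integral_of_le hq, integral_Ioc_eq_integral_Ioo]

theorem Integrable.mul_ite_one_zero {f : X → ℝ} (hf : Integrable f μ) {P : X → Prop}
    [DecidablePred P] (hP : MeasurableSet {y | P y}) :
    Integrable (fun y => f y * if P y then 1 else 0) μ := by
  refine (hf.indicator hP).congr (.of_forall fun y => ?_)
  by_cases h : P y <;> simp [h]

end MeasureTheory

theorem min_sub_mul_eq (a q : ℝ) :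
    min a q - q * a
      = (1 - q) * (a * if a ≤ q then 1 else 0) + q * ((1 - a) * if q < a then 1 else 0) := by
  rcases le_or_gt a q with h | h
  · simp [h, h.not_gt]
    ring
  · simp [h, h.not_ge, h.le]
    ring

theorem stmt_18_general
    {X : Type*} [MeasurableSpace X] (μ : Measure X) [IsProbabilityMeasure μ]
    (p : X → ℝ) (hpm : Measurable p) (hp01 : ∀ x, p x ∈ Set.Icc (0:ℝ) 1)
    (G : ℝ → ℝ) (hG : ∀ t, G t = (μ {y | t < p y}).toReal)
    (c : ℝ) (hc : c = ∫ y, p y ∂μ)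
    (η : X → ℝ) (hη : ∀ x, η x = (∫ u in (0:ℝ)..(p x), G u) - c * p x) :
    ∀ᵐ x ∂μ, η x
      = (1 - p x) * (∫ y, p y * (if p y ≤ p x then 1 else 0) ∂μ) +
        p x * (∫ y, (1 - p y) * (if p x < p y then 1 else 0) ∂μ) := by
  refine .of_forall fun x => ?_
  set q := p x
  have hp : Integrable p μ :=
    .of_bound hpm.aestronglyMeasurable 1 <| .of_forall fun y =>
      abs_le.2 ⟨by linarith [(hp01 y).1], (hp01 y).2⟩
  have hG' : G = fun t => μ.real {y | t < p y} := funext hG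
  have hmin : Integrable (fun y => min (p y) q) μ := hp.inf (integrable_const q)
  have hle : Integrable (fun y => p y * if p y ≤ q then 1 else 0) μ :=
    hp.mul_ite_one_zero (measurableSet_le hpm measurable_const)
  have hgt : Integrable (fun y => (1 - p y) * if q < p y then 1 else 0) μ :=
    ((integrable_const 1).sub hp).mul_ite_one_zero (measurableSet_lt measurable_const hpm)
  calc η x = ∫ y, min (p y) q ∂μ - q * ∫ y, p y ∂μ := by
        rw [hη, hG', hc, integral_min_eq_intervalIntegral_measureReal_lt hpm.aemeasurable
          (.of_forall fun y => (hp01 y).1) (hp01 x).1, mul_comm]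
    _ = ∫ y, (min (p y) q - q * p y) ∂μ := by
        rw [integral_sub hmin (hp.const_mul q), integral_const_mul]
    _ = _ := by
        simp_rw [min_sub_mul_eq]
        rw [integral_add (hle.const_mul _) (hgt.const_mul _), integral_const_mul,
          integral_const_mul]

theorem stmt_18
    {X : Type*} [MeasurableSpace X] (μ : Measure X) [IsProbabilityMeasure μ]
    (p : X → ℝ) (hpm : Measurable p) (hp01 : ∀ x, p x ∈ Set.Icc (0:ℝ) 1)
    (G : ℝ → ℝ) (hG : ∀ t, G t = (μ {y | t < p y}).toReal)
    (c : ℝ) (hc : c = ∫ y, p y ∂μ)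
    (η : X → ℝ) (hη : ∀ x, η x = (∫ u in (0:ℝ)..(p x), G u) - c * p x)
    (hcont : ∀ᵐ x ∂μ, μ {y | p y = p x} = 0) :
    ∀ᵐ x ∂μ, η x
      = (1 - p x) * (∫ y, p y * (if p y ≤ p x then 1 else 0) ∂μ) +
        p x * (∫ y, (1 - p y) * (if p x < p y then 1 else 0) ∂μ) :=
  stmt_18_general μ p hpm hp01 G hG c hc η hη
end
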